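/- arXiv:1301.2059 — 4 statements merged into one kernel-verified Lean document; each statement's English description precedes it below -/
import Mathlib

section
/- Let V ⊂ ℝ^d be a compact convex set with 0 ∈ V, and let v ↦ q_v be a C¹ map from V to Q(N) which is regular at 0, meaning that no point of {0} × (q_0⁻¹(0) ∩ S^N) is a critical point (in the tangent-cone sense) of the function (v,x) ↦ q_v(x) on V × S^N. Then for every sufficiently small ε > 0 the homotopy (t,v,x) ↦ q_{tv}(x) + (1−t)ε, t ∈ [0,1], (v,x) ∈ (εV) × S^N, is regular: for each t, no point (v,x) ∈ (εV) × S^N with q_{tv}(x) + (1−t)ε = 0 is a critical point in the tangent-cone sense of the function (v,x) ↦ q_{tv}(x) + (1−t)ε. -/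
/-!
Suppose the claim fails along `ε_n → 0`, with critical zeros `(ε_n w_n, x_n)` at times `t_n`,
and pass to a subsequence with `t_n → t₀`, `w_n → w₀`, `x_n → x₀`. Put `s_n = t_n ε_n w_n`.
Criticality in the sphere directions makes `x_n` an eigenvector of `q_{s_n}` with eigenvalue
`-(1 - t_n) ε_n`, hence `‖q_0 x_n‖ = O(ε_n)` and `q_0 x₀ = 0`; as `q_0` is self-adjoint,
`|⟪q_0 y, y⟫| ≤ C ‖q_0 y‖²`, so `⟪q_0 x_n, x_n⟫ = O(ε_n²)`. Expanding `q_{s_n}` to first order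
and dividing the equation `⟪q_{s_n} x_n, x_n⟫ = -(1 - t_n) ε_n` by `ε_n` gives
`t₀ ⟪dq_0(w₀) x₀, x₀⟫ = t₀ - 1` in the limit, while criticality in the directions of `ε_n V`
gives `t₀ ⟪dq_0(u - w₀) x₀, x₀⟫ ≤ 0` for `u ∈ V`. Thus `t₀ > 0` and `⟪dq_0(u) x₀, x₀⟫ ≤ 0` on
`V`, which makes `(0, x₀)` a critical point of `(v, x) ↦ ⟪q_v x, x⟫` on `V × S^N`.
-/

open scoped RealInnerProductSpace Pointwise

/-- The tangent cone of a subset `W` of a normed space at `z`: the closure of the set of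
velocities at `z` of smooth (C¹) curves starting from `z` and contained in `W` (near time `0`). -/
def curveTangentCone {E : Type*} [NormedAddCommGroup E] [NormedSpace ℝ E]
    (W : Set E) (z : E) : Set E :=
  closure {ξ : E | ∃ γ : ℝ → E, γ 0 = z ∧ ContDiff ℝ 1 γ ∧
    (∃ δ > 0, ∀ t ∈ Set.Icc (0:ℝ) δ, γ t ∈ W) ∧ deriv γ 0 = ξ}

/-- `z` is a critical point of the `C¹` function `g` on the subset `W` (in the tangent-cone
sense) if `⟨d_z g, ξ⟩ ≤ 0` for every `ξ` in the tangent cone of `W` at `z`. -/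
def IsCriticalPt {E : Type*} [NormedAddCommGroup E] [NormedSpace ℝ E]
    (g : E → ℝ) (W : Set E) (z : E) : Prop :=
  ∀ ξ ∈ curveTangentCone W z, fderiv ℝ g z ξ ≤ 0

open Filter Topology Asymptotics Set Metric

section TangentCone

variable {E F : Type*} [NormedAddCommGroup E] [NormedSpace ℝ E]
  [NormedAddCommGroup F] [NormedSpace ℝ F]

theorem mem_curveTangentCone_of_hasDerivAt {W : Set E} {z ξ : E} {γ : ℝ → E} {δ : ℝ}
    (hγ0 : γ 0 = z) (hγ : ContDiff ℝ 1 γ) (hδ : 0 < δ) (hγW : ∀ s ∈ Icc 0 δ, γ s ∈ W)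
    (hξ : HasDerivAt γ ξ 0) : ξ ∈ curveTangentCone W z :=
  subset_closure ⟨γ, hγ0, hγ, ⟨δ, hδ, hγW⟩, hξ.deriv⟩

theorem zero_mem_curveTangentCone {W : Set E} {z : E} (hz : z ∈ W) :
    0 ∈ curveTangentCone W z :=
  mem_curveTangentCone_of_hasDerivAt rfl contDiff_const one_pos (fun _ _ => hz)
    (hasDerivAt_const 0 z)

theorem Convex.sub_mem_curveTangentCone {W : Set E} (hW : Convex ℝ W) {z w : E} (hz : z ∈ W)
    (hw : w ∈ W) : w - z ∈ curveTangentCone W z := by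
  refine mem_curveTangentCone_of_hasDerivAt (γ := fun s => z + s • (w - z)) (by simp)
    (by fun_prop) one_pos (fun s hs => hW.add_smul_sub_mem hz hw hs) ?_
  simpa using ((hasDerivAt_id (0 : ℝ)).smul_const (w - z)).const_add z

theorem prodMk_mem_curveTangentCone {W : Set E} {W' : Set F} {z : E} {z' : F} {a : E} {b : F}
    (ha : a ∈ curveTangentCone W z) (hb : b ∈ curveTangentCone W' z') :
    (a, b) ∈ curveTangentCone (W ×ˢ W') (z, z') := by
  refine closure_mono ?_ (closure_prod_eq.superset (mk_mem_prod ha hb))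
  rintro ⟨a, b⟩ ⟨⟨γ, hγ0, hγ, ⟨δ, hδ, hγW⟩, rfl⟩, ⟨γ', hγ'0, hγ', ⟨δ', hδ', hγ'W⟩, rfl⟩⟩
  refine ⟨fun s => (γ s, γ' s), by simp [hγ0, hγ'0], hγ.prodMk hγ', ⟨min δ δ', lt_min hδ hδ',
    fun s hs => ⟨hγW s ⟨hs.1, hs.2.trans (min_le_left _ _)⟩,
      hγ'W s ⟨hs.1, hs.2.trans (min_le_right _ _)⟩⟩⟩, ?_⟩
  exact ((hγ.differentiable one_ne_zero 0).hasDerivAt.prodMk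
    (hγ'.differentiable one_ne_zero 0).hasDerivAt).deriv

theorem ContinuousLinearMap.map_nonpos_of_mem_curveTangentCone (Φ : E →L[ℝ] ℝ) {W : Set E}
    {z ξ : E} (hΦ : ∀ w ∈ W, Φ (w - z) ≤ 0) (hξ : ξ ∈ curveTangentCone W z) : Φ ξ ≤ 0 := by
  refine closure_minimal ?_ (isClosed_le Φ.continuous continuous_const) hξ
  rintro _ ⟨γ, hγ0, hγ, ⟨δ, hδ, hγW⟩, rfl⟩
  have hslope : Tendsto (slope γ 0) (𝓝[>] 0) (𝓝 (deriv γ 0)) :=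
    (hasDerivAt_iff_tendsto_slope.1 (hγ.differentiable one_ne_zero 0).hasDerivAt).mono_left
      (nhdsWithin_mono 0 fun s hs => ne_of_gt hs)
  refine le_of_tendsto ((Φ.continuous.tendsto _).comp hslope) ?_
  filter_upwards [Ioc_mem_nhdsGT hδ] with s hs
  rw [Function.comp_apply, slope_def_module, hγ0, sub_zero, map_smul, smul_eq_mul]
  exact mul_nonpos_of_nonneg_of_nonpos (inv_nonneg.2 hs.1.le) (hΦ _ (hγW s ⟨hs.1.le, hs.2⟩))

end TangentCone

section InnerProductSpace

variable {E F : Type*} [NormedAddCommGroup E] [NormedSpace ℝ E]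
  [NormedAddCommGroup F] [InnerProductSpace ℝ F]

theorem mem_curveTangentCone_sphere {x b : F} (hx : ‖x‖ = 1) (hb : ⟪x, b⟫ = 0) :
    b ∈ curveTangentCone (sphere (0 : F) 1) x := by
  set r : ℝ → ℝ := fun s => √(1 + s ^ 2 * ‖b‖ ^ 2)
  have hr0 : ∀ s, r s ≠ 0 := fun s => by positivity
  have hnorm : ∀ s : ℝ, ‖x + s • b‖ = r s := fun s => by
    rw [← Real.sqrt_sq (norm_nonneg _), norm_add_sq_real, hx, real_inner_smul_right, hb,
      norm_smul, Real.norm_eq_abs, mul_pow, sq_abs]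
    simp only [r]; ring_nf
  have hr : ContDiff ℝ 1 r := (contDiff_const.add (by fun_prop)).sqrt fun s => by positivity
  have hr' : HasDerivAt r 0 0 := by
    simpa using (((hasDerivAt_pow 2 (0 : ℝ)).mul_const (‖b‖ ^ 2)).const_add 1).sqrt (by simp)
  refine mem_curveTangentCone_of_hasDerivAt (γ := fun s => (r s)⁻¹ • (x + s • b)) (δ := 1)
    (by simp [r]) ((hr.inv hr0).smul (by fun_prop)) one_pos (fun s _ => ?_) ?_
  · rw [mem_sphere_zero_iff_norm, norm_smul, hnorm, norm_inv,
      Real.norm_of_nonneg (Real.sqrt_nonneg _), inv_mul_cancel₀ (hr0 s)]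
  · exact ((hr'.inv (hr0 0)).smul (((hasDerivAt_id (0 : ℝ)).smul_const b).const_add x))
      |>.congr_deriv (by simp [r])

theorem eq_inner_smul_of_forall_inner_eq_zero {x y : F} (hx : ‖x‖ = 1)
    (h : ∀ b, ⟪x, b⟫ = 0 → ⟪y, b⟫ = 0) : y = ⟪y, x⟫ • x := by
  obtain ⟨b, hb⟩ : ∃ b, b = y - ⟪y, x⟫ • x := ⟨_, rfl⟩
  have hxb : ⟪x, b⟫ = 0 := by
    simp [hb, inner_sub_right, real_inner_smul_right, hx, real_inner_comm]
  have hbb : ⟪b, b⟫ = 0 := by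
    nth_rewrite 1 [hb]
    rw [inner_sub_left, real_inner_smul_left, h b hxb, hxb, mul_zero, sub_zero]
  exact sub_eq_zero.1 (hb ▸ inner_self_eq_zero.1 hbb)

variable [CompleteSpace F] {q : E → F →L[ℝ] F}

theorem fderiv_inner_apply_smul_add_const_apply {t : ℝ} {z : E × F}
    (hq : DifferentiableAt ℝ q (t • z.1)) (hsa : IsSelfAdjoint (q (t • z.1))) (c : ℝ) (a : E)
    (b : F) :
    fderiv ℝ (fun w : E × F => ⟪q (t • w.1) w.2, w.2⟫ + c) z (a, b)
      = t * ⟪fderiv ℝ q (t • z.1) a z.2, z.2⟫ + 2 * ⟪q (t • z.1) z.2, b⟫ := by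
  have hqt : HasFDerivAt (fun w : E × F => q (t • w.1))
      ((fderiv ℝ q (t • z.1)).comp (t • ContinuousLinearMap.fst ℝ E F)) z :=
    hq.hasFDerivAt.comp z (hasFDerivAt_fst.const_smul t)
  rw [(((hqt.clm_apply hasFDerivAt_snd).inner ℝ hasFDerivAt_snd).add_const c).fderiv]
  have hsymm : ⟪q (t • z.1) b, z.2⟫ = ⟪q (t • z.1) z.2, b⟫ := by
    rw [show ⟪q (t • z.1) b, z.2⟫ = ⟪b, q (t • z.1) z.2⟫ from hsa.isSymmetric b z.2,
      real_inner_comm]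
  simp only [ContinuousLinearMap.comp_smulₛₗ, Real.ringHom_apply, ContinuousLinearMap.flip_smul,
    smul_apply, ContinuousLinearMap.comp_apply, ContinuousLinearMap.prod_apply, add_apply,
    ContinuousLinearMap.coe_snd', ContinuousLinearMap.flip_apply, ContinuousLinearMap.coe_fst',
    fderivInnerCLM_apply, inner_add_left, hsymm, real_inner_smul_left]
  ring

theorem IsCriticalPt.apply_eq_inner_smul {W : Set E} {t c : ℝ} {v : E} {x : F}
    (hcrit : IsCriticalPt (fun w : E × F => ⟪q (t • w.1) w.2, w.2⟫ + c)
      (W ×ˢ sphere (0 : F) 1) (v, x))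
    (hq : DifferentiableAt ℝ q (t • v)) (hsa : IsSelfAdjoint (q (t • v))) (hv : v ∈ W)
    (hx : ‖x‖ = 1) : q (t • v) x = ⟪q (t • v) x, x⟫ • x := by
  have hle : ∀ b, ⟪x, b⟫ = 0 → ⟪q (t • v) x, b⟫ ≤ 0 := fun b hb => by
    have := hcrit _ (prodMk_mem_curveTangentCone (zero_mem_curveTangentCone hv)
      (mem_curveTangentCone_sphere hx hb))
    rw [fderiv_inner_apply_smul_add_const_apply (z := (v, x)) hq hsa] at this
    simp only [map_zero, zero_apply, inner_zero_left, mul_zero, zero_add] at this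
    linarith
  refine eq_inner_smul_of_forall_inner_eq_zero hx fun b hb => le_antisymm (hle b hb) ?_
  simpa using hle (-b) (by simp [hb])

theorem IsCriticalPt.mul_inner_fderiv_sub_nonpos {W : Set E} (hW : Convex ℝ W) {t c : ℝ}
    {v u : E} {x : F}
    (hcrit : IsCriticalPt (fun w : E × F => ⟪q (t • w.1) w.2, w.2⟫ + c)
      (W ×ˢ sphere (0 : F) 1) (v, x))
    (hq : DifferentiableAt ℝ q (t • v)) (hsa : IsSelfAdjoint (q (t • v))) (hv : v ∈ W)
    (hx : ‖x‖ = 1) (hu : u ∈ W) : t * ⟪fderiv ℝ q (t • v) (u - v) x, x⟫ ≤ 0 := by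
  have := hcrit _ (prodMk_mem_curveTangentCone (hW.sub_mem_curveTangentCone hv hu)
    (zero_mem_curveTangentCone (mem_sphere_zero_iff_norm.2 hx)))
  rwa [fderiv_inner_apply_smul_add_const_apply (z := (v, x)) hq hsa, inner_zero_right, mul_zero,
    add_zero] at this

theorem isCriticalPt_inner_apply_zero {V : Set E} {x : F} (hq : DifferentiableAt ℝ q 0)
    (hsa : IsSelfAdjoint (q 0)) (hx : q 0 x = 0) (hV : ∀ u ∈ V, ⟪fderiv ℝ q 0 u x, x⟫ ≤ 0) :
    IsCriticalPt (fun w : E × F => ⟪q w.1 w.2, w.2⟫) (V ×ˢ sphere (0 : F) 1) (0, x) := by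
  rintro ⟨a, b⟩ hξ
  have hq1 : DifferentiableAt ℝ q ((1 : ℝ) • (0, x).1) := by simpa using hq
  have hsa1 : IsSelfAdjoint (q ((1 : ℝ) • (0, x).1)) := by simpa using hsa
  have := fderiv_inner_apply_smul_add_const_apply hq1 hsa1 0 a b
  simp only [one_smul, add_zero, hx, inner_zero_left, mul_zero, one_mul] at this
  rw [this]
  let Φ : E × F →L[ℝ] ℝ :=
    ((innerSL ℝ x).comp ((fderiv ℝ q 0).flip x)).comp (ContinuousLinearMap.fst ℝ E F)
  have hΦ : ∀ ξ : E × F, Φ ξ = ⟪fderiv ℝ q 0 ξ.1 x, x⟫ := fun ξ => by simp [Φ, real_inner_comm]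
  rw [← hΦ (a, b)]
  exact Φ.map_nonpos_of_mem_curveTangentCone (fun w hw => by simpa [hΦ] using hV _ hw.1) hξ

end InnerProductSpace

section FiniteDimensional

variable {F : Type*} [NormedAddCommGroup F] [InnerProductSpace ℝ F] [FiniteDimensional ℝ F]

theorem IsSelfAdjoint.exists_abs_inner_le_mul_norm_apply_sq {T : F →L[ℝ] F}
    (hT : IsSelfAdjoint T) : ∃ C, ∀ y, |⟪T y, y⟫| ≤ C * ‖T y‖ ^ 2 := by
  -- `T` is antilipschitz on `(ker T)ᗮ`, and `⟪T y, y⟫` only sees the component of `y` there.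
  set K := LinearMap.ker (T : F →ₗ[ℝ] F)
  obtain ⟨C, -, hC⟩ := ((T : F →ₗ[ℝ] F).comp Kᗮ.subtype).exists_antilipschitzWith <| by
    rw [LinearMap.ker_eq_bot']
    exact fun r hr => Subtype.ext (inner_self_eq_zero.1 (r.2 _ hr))
  refine ⟨C, fun y => ?_⟩
  set r := y - K.starProjection y
  have hPy : T (K.starProjection y) = 0 := K.starProjection_apply_mem y
  have hTr : T r = T y := by simp [r, hPy]
  have hval : ⟪T y, y⟫ = ⟪T y, r⟫ := by
    have hTP : ⟪T y, K.starProjection y⟫ = 0 := by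
      rw [show ⟪T y, K.starProjection y⟫ = ⟪y, T (K.starProjection y)⟫ from hT.isSymmetric _ _,
        hPy, inner_zero_right]
    rw [inner_sub_right, hTP, sub_zero]
  have hr : ‖r‖ ≤ C * ‖T y‖ := by
    simpa [hTr] using hC.le_mul_dist ⟨r, K.sub_starProjection_mem_orthogonal y⟩ 0
  calc |⟪T y, y⟫| = |⟪T y, r⟫| := by rw [hval]
    _ ≤ ‖T y‖ * ‖r‖ := abs_real_inner_le_norm _ _
    _ ≤ ‖T y‖ * (C * ‖T y‖) := by gcongr
    _ = C * ‖T y‖ ^ 2 := by ring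

end FiniteDimensional

section Asymptotics

variable {ι E F : Type*} [NormedAddCommGroup E] [NormedSpace ℝ E] {l : Filter ι}

theorem Filter.Tendsto.clm_apply [NormedAddCommGroup F] [NormedSpace ℝ F]
    {A : ι → E →L[ℝ] F} {y : ι → E} {A₀ : E →L[ℝ] F} {y₀ : E} (hA : Tendsto A l (𝓝 A₀))
    (hy : Tendsto y l (𝓝 y₀)) : Tendsto (fun i => A i (y i)) l (𝓝 (A₀ y₀)) :=
  ((continuous_fst.clm_apply continuous_snd).tendsto (A₀, y₀)).comp (hA.prodMk_nhds hy)

theorem Filter.Tendsto.isBigO_smul {ε : ι → ℝ} {v : ι → E} {v₀ : E} (hv : Tendsto v l (𝓝 v₀)) :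
    (fun i => ε i • v i) =O[l] ε := by
  simpa using (isBigO_refl ε l).smul (hv.isBigO_one ℝ)

variable [NormedAddCommGroup F] [NormedSpace ℝ F] {f : E → F} {f' : E →L[ℝ] F}
  {ε : ι → ℝ} {v : ι → E} {v₀ : E}

theorem HasFDerivAt.isBigO_comp_smul (hf : HasFDerivAt f f' 0) (hε : Tendsto ε l (𝓝 0))
    (hv : Tendsto v l (𝓝 v₀)) : (fun i => f (ε i • v i) - f 0) =O[l] ε := by
  have hs : Tendsto (fun i => ε i • v i) l (𝓝 0) := by simpa using hε.smul hv
  have h := hf.isBigO_sub.comp_tendsto hs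
  simp only [Function.comp_def, sub_zero] at h
  exact h.trans hv.isBigO_smul

theorem HasFDerivAt.isLittleO_comp_smul (hf : HasFDerivAt f f' 0) (hε : Tendsto ε l (𝓝 0))
    (hv : Tendsto v l (𝓝 v₀)) : (fun i => f (ε i • v i) - f 0 - ε i • f' (v i)) =o[l] ε := by
  have hs : Tendsto (fun i => ε i • v i) l (𝓝 0) := by simpa using hε.smul hv
  have h := (hasFDerivAt_iff_isLittleO_nhds_zero.1 hf).comp_tendsto hs
  simp only [Function.comp_def, zero_add, map_smul] at h
  exact h.trans_isBigO hv.isBigO_smul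

end Asymptotics

section BlowUp

variable {ι E F : Type*} [NormedAddCommGroup E] [NormedSpace ℝ E]
  [NormedAddCommGroup F] [InnerProductSpace ℝ F] {l : Filter ι}
  {q : E → F →L[ℝ] F} {ε : ι → ℝ} {v : ι → E} {x : ι → F} {v₀ : E}

theorem isBigO_apply_of_norm_eq_one {A : ι → F →L[ℝ] F} (hx : ∀ i, ‖x i‖ = 1) :
    (fun i => A i (x i)) =O[l] A :=
  .of_bound 1 <| .of_forall fun i => by simpa [hx i] using (A i).le_opNorm (x i)

theorem isBigO_inner_apply_self_of_norm_eq_one {A : ι → F →L[ℝ] F} (hx : ∀ i, ‖x i‖ = 1) :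
    (fun i => ⟪A i (x i), x i⟫) =O[l] A :=
  .of_bound 1 <| .of_forall fun i => by
    rw [Real.norm_eq_abs, one_mul]
    calc |⟪A i (x i), x i⟫| ≤ ‖A i (x i)‖ * ‖x i‖ := abs_real_inner_le_norm _ _
      _ ≤ ‖A i‖ := by simpa [hx i] using (A i).le_opNorm (x i)

theorem isBigO_apply_zero_of_isBigO_apply_smul (hq : DifferentiableAt ℝ q 0)
    (hε : Tendsto ε l (𝓝 0)) (hv : Tendsto v l (𝓝 v₀)) (hx : ∀ i, ‖x i‖ = 1)
    (heig : (fun i => q (ε i • v i) (x i)) =O[l] ε) : (fun i => q 0 (x i)) =O[l] ε :=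
  (heig.sub ((isBigO_apply_of_norm_eq_one hx).trans
    (hq.hasFDerivAt.isBigO_comp_smul hε hv))).congr_left fun i => by simp

variable [FiniteDimensional ℝ F]

theorem IsSelfAdjoint.isLittleO_inner_apply_self {T : F →L[ℝ] F} (hT : IsSelfAdjoint T)
    (hε : Tendsto ε l (𝓝 0)) (hTx : (fun i => T (x i)) =O[l] ε) :
    (fun i => ⟪T (x i), x i⟫) =o[l] ε := by
  obtain ⟨C, hC⟩ := hT.exists_abs_inner_le_mul_norm_apply_sq
  have hsq : (fun i => ε i ^ 2) =o[l] ε := by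
    simpa [sq] using ((isLittleO_one_iff ℝ).2 hε).mul_isBigO (isBigO_refl ε l)
  exact ((IsBigO.of_bound C (.of_forall fun i => by simpa using hC (x i))).trans
    (hTx.norm_left.pow 2)).trans_isLittleO hsq

variable [l.NeBot] {t : ι → ℝ} {x₀ : F} {t₀ : ℝ}

theorem inner_fderiv_apply_eq_of_tendsto (hq : DifferentiableAt ℝ q 0)
    (hsa : IsSelfAdjoint (q 0))
    (hε : Tendsto ε l (𝓝 0)) (hε0 : ∀ i, ε i ≠ 0) (hv : Tendsto v l (𝓝 v₀))
    (ht : Tendsto t l (𝓝 t₀)) (hxt : Tendsto x l (𝓝 x₀)) (hx : ∀ i, ‖x i‖ = 1)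
    (hq0 : (fun i => q 0 (x i)) =O[l] ε)
    (hval : ∀ i, ⟪q (ε i • v i) (x i), x i⟫ = -((1 - t i) * ε i)) :
    ⟪fderiv ℝ q 0 v₀ x₀, x₀⟫ = t₀ - 1 := by
  set a : ι → ℝ := fun i => ⟪fderiv ℝ q 0 (v i) (x i), x i⟫ + 1 - t i
  have hident : ∀ i, -⟪q 0 (x i), x i⟫
      - ⟪(q (ε i • v i) - q 0 - ε i • fderiv ℝ q 0 (v i)) (x i), x i⟫ = ε i * a i := fun i => by
    simp only [sub_apply, smul_apply, inner_sub_left, real_inner_smul_left, hval, a]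
    ring
  have hεa : (fun i => ε i * a i) =o[l] ε :=
    ((hsa.isLittleO_inner_apply_self hε hq0).neg_left.sub
      ((isBigO_inner_apply_self_of_norm_eq_one hx).trans_isLittleO
        (hq.hasFDerivAt.isLittleO_comp_smul hε hv))).congr_left hident
  have ha0 : Tendsto a l (𝓝 0) :=
    hεa.tendsto_div_nhds_zero.congr fun i => mul_div_cancel_left₀ _ (hε0 i)
  have ha : Tendsto a l (𝓝 (⟪fderiv ℝ q 0 v₀ x₀, x₀⟫ + 1 - t₀)) :=
    ((((tendsto_const_nhds (x := fderiv ℝ q 0)).clm_apply hv).clm_apply hxt).inner hxt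
      |>.add_const 1).sub ht
  linarith [tendsto_nhds_unique ha ha0]

theorem isCriticalPt_inner_apply_zero_of_tendsto (hq : ContDiff ℝ 1 q)
    (hsa : ∀ v, IsSelfAdjoint (q v)) {V : Set E} (hV : Convex ℝ V) {w : ι → E} {w₀ : E}
    (hεpos : ∀ i, 0 < ε i) (hε : Tendsto ε l (𝓝 0)) (ht : ∀ i, t i ∈ Icc (0 : ℝ) 1)
    (hw : ∀ i, w i ∈ V) (hx : ∀ i, ‖x i‖ = 1) (htt : Tendsto t l (𝓝 t₀))
    (hwt : Tendsto w l (𝓝 w₀)) (hxt : Tendsto x l (𝓝 x₀))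
    (hzero : ∀ i, ⟪q (t i • ε i • w i) (x i), x i⟫ + (1 - t i) * ε i = 0)
    (hcrit : ∀ i, IsCriticalPt (fun z : E × F => ⟪q (t i • z.1) z.2, z.2⟫ + (1 - t i) * ε i)
      ((ε i • V) ×ˢ sphere (0 : F) 1) (ε i • w i, x i)) :
    q 0 x₀ = 0 ∧
      IsCriticalPt (fun z : E × F => ⟪q z.1 z.2, z.2⟫) (V ×ˢ sphere (0 : F) 1) (0, x₀) := by
  have hdiff := hq.differentiable one_ne_zero
  have hs : ∀ i, t i • ε i • w i = ε i • t i • w i := fun i => smul_comm _ _ _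
  have hv : Tendsto (fun i => t i • w i) l (𝓝 (t₀ • w₀)) := htt.smul hwt
  have hval' : ∀ i, ⟪q (t i • ε i • w i) (x i), x i⟫ = -((1 - t i) * ε i) := fun i => by
    linarith [hzero i]
  have hval : ∀ i, ⟪q (ε i • t i • w i) (x i), x i⟫ = -((1 - t i) * ε i) := fun i =>
    hs i ▸ hval' i
  have heig : (fun i => q (ε i • t i • w i) (x i)) =O[l] ε := .of_bound 1 <| .of_forall fun i => by
    have h1t : 0 ≤ 1 - t i := sub_nonneg.2 (ht i).2
    rw [← hs, (hcrit i).apply_eq_inner_smul (hdiff _) (hsa _) (smul_mem_smul_set (hw i)) (hx i),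
      norm_smul, hx i, mul_one, hval', norm_neg, norm_mul, Real.norm_of_nonneg h1t]
    exact mul_le_mul_of_nonneg_right (by linarith [(ht i).1]) (norm_nonneg _)
  have hq0 := isBigO_apply_zero_of_isBigO_apply_smul (hdiff 0) hε hv hx heig
  have hx₀ : q 0 x₀ = 0 := tendsto_nhds_unique (((q 0).continuous.tendsto x₀).comp hxt)
    (hq0.trans_tendsto hε)
  have hL := inner_fderiv_apply_eq_of_tendsto (hdiff 0) (hsa 0) hε (fun i => (hεpos i).ne') hv
    htt hxt hx hq0 hval
  refine ⟨hx₀, isCriticalPt_inner_apply_zero (hdiff 0) (hsa 0) hx₀ fun u hu => ?_⟩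
  have hdir : ∀ i, t i * ⟪fderiv ℝ q (ε i • t i • w i) (u - w i) (x i), x i⟫ ≤ 0 := fun i => by
    have := (hcrit i).mul_inner_fderiv_sub_nonpos (hV.smul _) (hdiff _) (hsa _)
      (smul_mem_smul_set (hw i)) (hx i) (smul_mem_smul_set hu)
    rw [← smul_sub, map_smul, smul_apply, real_inner_smul_left, hs] at this
    nlinarith [hεpos i]
  have hDq : Tendsto (fun i => fderiv ℝ q (ε i • t i • w i)) l (𝓝 (fderiv ℝ q 0)) :=
    ((hq.continuous_fderiv one_ne_zero).tendsto 0).comp (by simpa using hε.smul hv)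
  have hlim := le_of_tendsto' (htt.mul (((hDq.clm_apply (tendsto_const_nhds.sub hwt)).clm_apply
    hxt).inner hxt)) hdir
  have ht₀ : t₀ ∈ Icc (0 : ℝ) 1 := isClosed_Icc.mem_of_tendsto htt (.of_forall ht)
  rw [map_sub, sub_apply, inner_sub_left] at hlim
  rw [map_smul, smul_apply, real_inner_smul_left] at hL
  have ht₀pos : 0 < t₀ := ht₀.1.lt_of_ne (by rintro rfl; simp at hL)
  nlinarith [ht₀.2]

end BlowUp

theorem statement5_general {d N : ℕ} (V : Set (EuclideanSpace ℝ (Fin d)))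
    (hVcpt : IsCompact V) (hVconv : Convex ℝ V)
    (q : EuclideanSpace ℝ (Fin d) →
      (EuclideanSpace ℝ (Fin (N+1)) →L[ℝ] EuclideanSpace ℝ (Fin (N+1))))
    (hq : ContDiff ℝ 1 q)
    (hsa : ∀ v, IsSelfAdjoint (q v))
    (hreg : ∀ x : EuclideanSpace ℝ (Fin (N+1)), ‖x‖ = 1 → ⟪q 0 x, x⟫ = 0 →
      ¬ IsCriticalPt
          (fun w : EuclideanSpace ℝ (Fin d) × EuclideanSpace ℝ (Fin (N+1)) =>
            (⟪q w.1 w.2, w.2⟫ : ℝ))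
          (V ×ˢ Metric.sphere (0 : EuclideanSpace ℝ (Fin (N+1))) 1)
          ((0 : EuclideanSpace ℝ (Fin d)), x)) :
    ∃ ε₀ > 0, ∀ ε : ℝ, 0 < ε → ε ≤ ε₀ → ∀ t ∈ Set.Icc (0:ℝ) 1,
      ∀ z ∈ (ε • V) ×ˢ Metric.sphere (0 : EuclideanSpace ℝ (Fin (N+1))) 1,
        ⟪q (t • z.1) z.2, z.2⟫ + (1 - t) * ε = 0 →
        ¬ IsCriticalPt
            (fun w : EuclideanSpace ℝ (Fin d) × EuclideanSpace ℝ (Fin (N+1)) =>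
              (⟪q (t • w.1) w.2, w.2⟫ + (1 - t) * ε : ℝ))
            ((ε • V) ×ˢ Metric.sphere (0 : EuclideanSpace ℝ (Fin (N+1))) 1) z := by
  by_contra! h
  choose ε hεpos hεle t ht z hz hzero hcrit using fun n : ℕ => h (1 / (n + 1)) (by positivity)
  choose w hw hwz using fun n => (hz n).1
  beta_reduce at hwz
  have hzw : ∀ n, z n = (ε n • w n, (z n).2) := fun n => Prod.ext (hwz n).symm rfl
  have hx : ∀ n, ‖(z n).2‖ = 1 := fun n => mem_sphere_zero_iff_norm.1 (hz n).2
  obtain ⟨⟨t₀, w₀, x₀⟩, ⟨-, -, hx₀⟩, φ, hφ, hlim⟩ :=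
    (isCompact_Icc.prod (hVcpt.prod (isCompact_sphere 0 1))).tendsto_subseq
      (x := fun n => (t n, w n, (z n).2)) fun n => ⟨ht n, hw n, (hz n).2⟩
  have hε : Tendsto ε atTop (𝓝 0) :=
    squeeze_zero (fun n => (hεpos n).le) hεle tendsto_one_div_add_atTop_nhds_zero_nat
  obtain ⟨hq0, hcrit0⟩ := isCriticalPt_inner_apply_zero_of_tendsto hq hsa hVconv
    (fun n => hεpos (φ n)) (hε.comp hφ.tendsto_atTop) (fun n => ht (φ n)) (fun n => hw (φ n))
    (fun n => hx (φ n)) hlim.fst_nhds hlim.snd_nhds.fst_nhds hlim.snd_nhds.snd_nhds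
    (fun n => hwz (φ n) ▸ hzero (φ n)) (fun n => hzw (φ n) ▸ hcrit (φ n))
  dsimp only at hq0 hcrit0
  exact hreg x₀ (mem_sphere_zero_iff_norm.1 hx₀) (by rw [hq0, inner_zero_left]) hcrit0

/-- let `V ⊆ ℝ^d` be compact convex with `0 ∈ V` and `v ↦ q_v` a `C¹` family of
quadratic forms (given by their self-adjoint operators `q v`) which is regular at `0`: no point
of `{0} × (q₀⁻¹(0) ∩ S^N)` is a critical point (tangent-cone sense) of `(v,x) ↦ q_v(x)` on
`V × S^N`. Then for every sufficiently small `ε > 0` the homotopy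
`(t,v,x) ↦ q_{tv}(x) + (1−t)ε` on `(εV) × S^N`, `t ∈ [0,1]`, is regular. -/
theorem statement5 {d N : ℕ} (V : Set (EuclideanSpace ℝ (Fin d)))
    (hVcpt : IsCompact V) (hVconv : Convex ℝ V) (hV0 : (0 : EuclideanSpace ℝ (Fin d)) ∈ V)
    (q : EuclideanSpace ℝ (Fin d) →
      (EuclideanSpace ℝ (Fin (N+1)) →L[ℝ] EuclideanSpace ℝ (Fin (N+1))))
    (hq : ContDiff ℝ 1 q)
    (hsa : ∀ v, IsSelfAdjoint (q v))
    (hreg : ∀ x : EuclideanSpace ℝ (Fin (N+1)), ‖x‖ = 1 → ⟪q 0 x, x⟫ = 0 →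
      ¬ IsCriticalPt
          (fun w : EuclideanSpace ℝ (Fin d) × EuclideanSpace ℝ (Fin (N+1)) =>
            (⟪q w.1 w.2, w.2⟫ : ℝ))
          (V ×ˢ Metric.sphere (0 : EuclideanSpace ℝ (Fin (N+1))) 1)
          ((0 : EuclideanSpace ℝ (Fin d)), x)) :
    ∃ ε₀ > 0, ∀ ε : ℝ, 0 < ε → ε ≤ ε₀ → ∀ t ∈ Set.Icc (0:ℝ) 1,
      ∀ z ∈ (ε • V) ×ˢ Metric.sphere (0 : EuclideanSpace ℝ (Fin (N+1))) 1,
        ⟪q (t • z.1) z.2, z.2⟫ + (1 - t) * ε = 0 →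
        ¬ IsCriticalPt
            (fun w : EuclideanSpace ℝ (Fin d) × EuclideanSpace ℝ (Fin (N+1)) =>
              (⟪q (t • w.1) w.2, w.2⟫ + (1 - t) * ε : ℝ))
            ((ε • V) ×ˢ Metric.sphere (0 : EuclideanSpace ℝ (Fin (N+1))) 1) z :=
  statement5_general V hVcpt hVconv q hq hsa hreg
end

section
/- Let φ : M → ℝ^{k+1} be a C¹ map and φ*(p,x) = ⟨p, φ(x)⟩ its Lagrange function on S^k × M. Then 0 is a critical value of φ if and only if 0 is a critical value of φ*. Explicitly: there exists x ∈ M with φ(x) = 0 at which the differential D_xφ : T_xM → ℝ^{k+1} is not surjective if and only if there exists (p,x) ∈ S^k × M with φ*(p,x) = 0 at which the differential of φ* vanishes. -/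
/-!
The differential of `φ*` at `(p, x)` is `(v, w) ↦ ⟪v, φ x⟫ + ⟪p, D_xφ w⟫` with `v ∈ T_pS^k = p^⊥`,
so it vanishes iff `φ x ∈ (p^⊥)^⊥` and `p ⊥ range D_xφ`. If moreover `⟪p, φ x⟫ = 0`, then `φ x` lies
in both `p^⊥` and `(p^⊥)^⊥`, hence is `0`, and the unit vector `p` witnesses that `D_xφ` is not
surjective. Conversely, a non-surjective `D_xφ` has a unit normal `p` to its range.
-/

open scoped Manifold RealInnerProductSpace

notation "𝕊" k => Metric.sphere (0 : EuclideanSpace ℝ (Fin (k+1))) 1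

open Metric

section InnerProductSpace

variable {F : Type*} [NormedAddCommGroup F] [InnerProductSpace ℝ F]

theorem Submodule.eq_zero_of_mem_orthogonal_orthogonal_singleton {p y : F}
    (hy : y ∈ (ℝ ∙ p)ᗮᗮ) (hpy : ⟪p, y⟫ = 0) : y = 0 := by
  have hy' : y ∈ (ℝ ∙ p)ᗮ := Submodule.mem_orthogonal_singleton_iff_inner_right.2 hpy
  have hmem := Submodule.mem_inf.2 ⟨hy', hy⟩
  rwa [Submodule.inf_orthogonal_eq_bot, Submodule.mem_bot] at hmem

theorem ContinuousLinearMap.not_surjective_iff_exists_norm_eq_one_inner_eq_zero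
    {E : Type*} [TopologicalSpace E] [AddCommMonoid E] [Module ℝ E] [FiniteDimensional ℝ F]
    (L : E →L[ℝ] F) :
    ¬ Function.Surjective L ↔ ∃ p : F, ‖p‖ = 1 ∧ ∀ v, ⟪p, L v⟫ = 0 := by
  constructor
  · intro hL
    have hperp : L.rangeᗮ ≠ ⊥ := by
      rwa [Ne, Submodule.orthogonal_eq_bot_iff, LinearMap.range_eq_top]
    obtain ⟨q, hq, hq0⟩ := Submodule.exists_mem_ne_zero_of_ne_bot hperp
    refine ⟨‖q‖⁻¹ • q, by simp [norm_smul, hq0], fun v => ?_⟩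
    have hqv : ⟪q, L v⟫ = 0 := (Submodule.mem_orthogonal' _ _).1 hq _ ⟨v, rfl⟩
    rw [real_inner_smul_left, hqv, mul_zero]
  · rintro ⟨p, hp, hpL⟩ hL
    obtain ⟨v, rfl⟩ := hL p
    have hself := hpL v
    rw [real_inner_self_eq_norm_sq, hp] at hself
    norm_num at hself

end InnerProductSpace

section LagrangeFunction

variable {E : Type*} [NormedAddCommGroup E] [InnerProductSpace ℝ E]
  {F H M : Type*} [NormedAddCommGroup F] [NormedSpace ℝ F] [TopologicalSpace H]
  {I : ModelWithCorners ℝ F H} [TopologicalSpace M] [ChartedSpace H M]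

theorem HasMFDerivAt.inner {f g : M → E} {x : M} {f' g' : F →L[ℝ] E}
    (hf : HasMFDerivAt I 𝓘(ℝ, E) f x f') (hg : HasMFDerivAt I 𝓘(ℝ, E) g x g') :
    HasMFDerivAt I 𝓘(ℝ, ℝ) (fun y => ⟪f y, g y⟫) x
      ((fderivInnerCLM ℝ (f x, g x)).comp (f'.prod g')) :=
  ⟨hf.1.inner hg.1, by simpa only [mfld_simps] using! hf.2.inner ℝ hg.2⟩

def lagrangeFunction (φ : M → E) (z : sphere (0 : E) 1 × M) : ℝ := ⟪(z.1 : E), φ z.2⟫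

variable {n : ℕ} [Fact (Module.finrank ℝ E = n + 1)] {φ : M → E} {x : M}

theorem mfderiv_lagrangeFunction_apply (hφ : MDifferentiableAt I 𝓘(ℝ, E) φ x)
    (p : sphere (0 : E) 1) (v : EuclideanSpace ℝ (Fin n)) (w : F) :
    mfderiv ((𝓡 n).prod I) 𝓘(ℝ, ℝ) (lagrangeFunction φ) (p, x) (v, w) =
      ⟪(p : E), mvfderiv I φ x w⟫ + ⟪φ x, mvfderiv (𝓡 n) ((↑) : sphere (0 : E) 1 → E) p v⟫ := by
  have hcoe :=
    ((contMDiff_coe_sphere (m := 1) p).mdifferentiableAt one_ne_zero).hasMFDerivAt.comp (p, x)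
      (hasMFDerivAt_fst (I := 𝓡 n) (I' := I) (p, x))
  have hφ' := hφ.hasMFDerivAt.comp (p, x) (hasMFDerivAt_snd (I := 𝓡 n) (I' := I) (p, x))
  -- Evaluating `fderivInnerCLM` is definitional; only the second inner product needs swapping.
  exact (DFunLike.congr_fun (hcoe.inner hφ').mfderiv (v, w)).trans
    (congrArg _ (real_inner_comm _ _))

theorem mfderiv_lagrangeFunction_eq_zero_iff (hφ : MDifferentiableAt I 𝓘(ℝ, E) φ x)
    (p : sphere (0 : E) 1) :
    mfderiv ((𝓡 n).prod I) 𝓘(ℝ, ℝ) (lagrangeFunction φ) (p, x) = 0 ↔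
      φ x ∈ (ℝ ∙ (p : E))ᗮᗮ ∧ ∀ w, ⟪(p : E), mvfderiv I φ x w⟫ = 0 := by
  rw [← range_mvfderiv_subtypeVal (n := n) p, Submodule.mem_orthogonal']
  constructor
  · intro h
    have hsum v w : ⟪(p : E), mvfderiv I φ x w⟫ +
        ⟪φ x, mvfderiv (𝓡 n) ((↑) : sphere (0 : E) 1 → E) p v⟫ = 0 := by
      rw [← mfderiv_lagrangeFunction_apply hφ p v w, h]
      rfl
    refine ⟨?_, fun w => by simpa using hsum 0 w⟩
    rintro _ ⟨v, rfl⟩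
    simpa using hsum v 0
  · rintro ⟨hφx, hp⟩
    ext ⟨v, w⟩
    exact (mfderiv_lagrangeFunction_apply hφ p v w).trans
      ((congrArg₂ (· + ·) (hp w) (hφx _ ⟨v, rfl⟩)).trans (add_zero 0))

end LagrangeFunction

theorem statement9_general {k m : ℕ} {M : Type*} [TopologicalSpace M]
    [ChartedSpace (EuclideanSpace ℝ (Fin m)) M]
    (φ : M → EuclideanSpace ℝ (Fin (k+1)))
    (hφ : ContMDiff (𝓡 m) 𝓘(ℝ, EuclideanSpace ℝ (Fin (k+1))) 1 φ) :
    (∃ x : M, φ x = 0 ∧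
        ¬ Function.Surjective (mfderiv (𝓡 m) 𝓘(ℝ, EuclideanSpace ℝ (Fin (k+1))) φ x)) ↔
      (∃ z : (𝕊 k) × M,
        ⟪(z.1 : EuclideanSpace ℝ (Fin (k+1))), φ z.2⟫ = 0 ∧
        mfderiv ((𝓡 k).prod (𝓡 m)) 𝓘(ℝ, ℝ)
          (fun w : (𝕊 k) × M => ⟪(w.1 : EuclideanSpace ℝ (Fin (k+1))), φ w.2⟫) z = 0) := by
  have : Fact (Module.finrank ℝ (EuclideanSpace ℝ (Fin (k+1))) = k + 1) :=
    ⟨finrank_euclideanSpace_fin⟩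
  have hdiff x : MDifferentiableAt (𝓡 m) 𝓘(ℝ, EuclideanSpace ℝ (Fin (k+1))) φ x :=
    (hφ x).mdifferentiableAt one_ne_zero
  constructor
  · rintro ⟨x, hx, hns⟩
    replace hns : ¬ Function.Surjective (mvfderiv (𝓡 m) φ x) := hns
    obtain ⟨p, hp, hpD⟩ :=
      (mvfderiv (𝓡 m) φ x).not_surjective_iff_exists_norm_eq_one_inner_eq_zero.1 hns
    exact ⟨(⟨p, mem_sphere_zero_iff_norm.2 hp⟩, x), by simp [hx],
      (mfderiv_lagrangeFunction_eq_zero_iff (hdiff x) _).2 ⟨by simp [hx], hpD⟩⟩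
  · rintro ⟨⟨p, x⟩, hpx, hcrit⟩
    obtain ⟨hφx, hpD⟩ := (mfderiv_lagrangeFunction_eq_zero_iff (hdiff x) p).1 hcrit
    exact ⟨x, Submodule.eq_zero_of_mem_orthogonal_orthogonal_singleton hφx hpx,
      (mvfderiv (𝓡 m) φ x).not_surjective_iff_exists_norm_eq_one_inner_eq_zero.2
        ⟨(p : EuclideanSpace ℝ (Fin (k+1))), norm_eq_of_mem_sphere p, hpD⟩⟩

/-- `0` is a critical value of a `C¹` map `φ : M → ℝ^{k+1}` if and only if `0` is a
critical value of its Lagrange function `φ* : S^k × M → ℝ`, `φ*(p,x) = ⟨p, φ(x)⟩`. -/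
theorem statement9 {k m : ℕ} {M : Type*} [TopologicalSpace M]
    [ChartedSpace (EuclideanSpace ℝ (Fin m)) M]
    [IsManifold (𝓡 m) (⊤ : ℕ∞) M] [CompactSpace M]
    (φ : M → EuclideanSpace ℝ (Fin (k+1)))
    (hφ : ContMDiff (𝓡 m) 𝓘(ℝ, EuclideanSpace ℝ (Fin (k+1))) 1 φ) :
    (∃ x : M, φ x = 0 ∧
        ¬ Function.Surjective (mfderiv (𝓡 m) 𝓘(ℝ, EuclideanSpace ℝ (Fin (k+1))) φ x)) ↔
      (∃ z : (𝕊 k) × M,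
        ⟪(z.1 : EuclideanSpace ℝ (Fin (k+1))), φ z.2⟫ = 0 ∧
        mfderiv ((𝓡 k).prod (𝓡 m)) 𝓘(ℝ, ℝ)
          (fun w : (𝕊 k) × M => ⟪(w.1 : EuclideanSpace ℝ (Fin (k+1))), φ w.2⟫) z = 0) :=
  statement9_general φ hφ
end

section
/- Let φ : M → ℝ^{k+1} be continuous and B_φ = {(p,x) ∈ S^k × M : ⟨p, φ(x)⟩ > 0}. Then the projection (p,x) ↦ x maps B_φ onto M \ φ⁻¹(0), its fibers are open hemispheres of S^k, and this projection is a homotopy equivalence between B_φ and M \ φ⁻¹(0). -/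
open scoped Manifold RealInnerProductSpace

/-!
The fibre of `B_φ` over `x` is the open hemisphere centred at `φ x / ‖φ x‖`. Pushing `p` along
the segment from `p` to `φ x` stays in the open half-space `{v | 0 < ⟪v, φ x⟫}`, so its radial
projection onto the sphere deforms `B_φ`, fibrewise, onto the section `x ↦ (φ x / ‖φ x‖, x)`.
-/

open Metric

section HemisphereBundle

variable {E X : Type*} [NormedAddCommGroup E] [InnerProductSpace ℝ E]

theorem ne_zero_of_real_inner_pos {v w : E} (h : 0 < ⟪v, w⟫) : v ≠ 0 := by
  rintro rfl
  simp at h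

theorem inner_convexCombination_pos {p y : E} (hp : 0 < ⟪p, y⟫) (hy : y ≠ 0) {t : ℝ}
    (ht₀ : 0 ≤ t) (ht₁ : t ≤ 1) : 0 < ⟪(1 - t) • p + t • y, y⟫ := by
  have hconv : Convex ℝ {v : E | 0 < ⟪y, v⟫} := convex_halfSpace_gt (innerSL ℝ y).isLinear 0
  have hmem := hconv (x := p) (y := y) (by rwa [Set.mem_ofPred_eq, real_inner_comm])
    (real_inner_self_pos.2 hy) (sub_nonneg.2 ht₁) ht₀ (sub_add_cancel 1 t)
  rwa [Set.mem_ofPred_eq, real_inner_comm] at hmem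

def hemisphereBundle (ψ : X → E) : Set (sphere (0 : E) 1 × X) :=
  {z | 0 < ⟪(z.1 : E), ψ z.2⟫}

namespace hemisphereBundle

variable {ψ : X → E}

theorem ne_zero_of_mem {z : sphere (0 : E) 1 × X} (hz : z ∈ hemisphereBundle ψ) :
    ψ z.2 ≠ 0 := by
  rintro h
  simp [hemisphereBundle, h] at hz

variable (ψ) in
noncomputable def mk (v : E) (x : X) (h : 0 < ⟪v, ψ x⟫) : hemisphereBundle ψ :=
  ⟨(⟨‖v‖⁻¹ • v, by
    rw [mem_sphere_zero_iff_norm]; exact norm_smul_inv_norm (ne_zero_of_real_inner_pos h)⟩, x),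
    by simpa [hemisphereBundle, real_inner_smul_left] using
      mul_pos (inv_pos.2 (norm_pos_iff.2 (ne_zero_of_real_inner_pos h))) h⟩

theorem mk_of_mem_sphere {v : E} (hv : v ∈ sphere (0 : E) 1) (x : X) (h : 0 < ⟪v, ψ x⟫) :
    mk ψ v x h = ⟨(⟨v, hv⟩, x), h⟩ := by
  rw [mem_sphere_zero_iff_norm] at hv
  ext <;> simp [mk, hv]

theorem image_snd : Prod.snd '' hemisphereBundle ψ = {x | ψ x ≠ 0} := by
  ext x
  refine ⟨?_, fun hx => ?_⟩
  · rintro ⟨z, hz, rfl⟩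
    exact ne_zero_of_mem hz
  · exact ⟨mk ψ (ψ x) x (real_inner_self_pos.2 hx), Subtype.prop _, rfl⟩

variable [TopologicalSpace X]

theorem continuous_mk {Y : Type*} [TopologicalSpace Y] {v : Y → E} {x : Y → X}
    (hv : Continuous v) (hx : Continuous x)
    (h : ∀ y, 0 < ⟪v y, ψ (x y)⟫) : Continuous fun y => mk ψ (v y) (x y) (h y) := by
  have hv₀ : ∀ y, ‖v y‖ ≠ 0 := fun y => norm_ne_zero_iff.2 (ne_zero_of_real_inner_pos (h y))
  unfold mk
  fun_prop (disch := exact hv₀ _)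

variable (ψ) in
def proj : C(hemisphereBundle ψ, {x // ψ x ≠ 0}) where
  toFun z := ⟨z.1.2, ne_zero_of_mem z.2⟩
  continuous_toFun := by fun_prop

noncomputable def pole (hψ : Continuous ψ) : C({x // ψ x ≠ 0}, hemisphereBundle ψ) where
  toFun x := mk ψ (ψ x) x (real_inner_self_pos.2 x.2)
  continuous_toFun := continuous_mk (by fun_prop) (by fun_prop) _

noncomputable def deformation (hψ : Continuous ψ) :
    ContinuousMap.Homotopy (ContinuousMap.id (hemisphereBundle ψ)) ((pole hψ).comp (proj ψ)) where
  toFun q := mk ψ ((1 - (q.1 : ℝ)) • (q.2.1.1 : E) + (q.1 : ℝ) • ψ q.2.1.2) q.2.1.2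
    (inner_convexCombination_pos q.2.2 (ne_zero_of_mem q.2.2) q.1.2.1 q.1.2.2)
  continuous_toFun := continuous_mk (by fun_prop) (by fun_prop) _
  map_zero_left z := by simp [mk_of_mem_sphere]
  map_one_left z := by simp [pole, proj]

noncomputable def homotopyEquiv (hψ : Continuous ψ) :
    ContinuousMap.HomotopyEquiv (hemisphereBundle ψ) {x // ψ x ≠ 0} where
  toFun := proj ψ
  invFun := pole hψ
  left_inv := ⟨(deformation hψ).symm⟩
  right_inv := .refl _

end hemisphereBundle

end HemisphereBundle

theorem statement10_general {k : ℕ} {M : Type*} [TopologicalSpace M]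
    (φ : M → EuclideanSpace ℝ (Fin (k+1))) (hφ : Continuous φ)
    (B : Set ((𝕊 k) × M))
    (hB : B = {z : (𝕊 k) × M | 0 < ⟪(z.1 : EuclideanSpace ℝ (Fin (k+1))), φ z.2⟫}) :
    (Prod.snd '' B = {x : M | φ x ≠ 0}) ∧
    (∀ x : M, φ x ≠ 0 →
      {p : (𝕊 k) | (p, x) ∈ B}
        = {p : (𝕊 k) | 0 < ⟪(p : EuclideanSpace ℝ (Fin (k+1))), φ x⟫}) ∧
    (∃ e : ContinuousMap.HomotopyEquiv B {x : M // φ x ≠ 0},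
      ∀ z : B, (e.toFun z : M) = (z : (𝕊 k) × M).2) := by
  subst hB
  exact ⟨hemisphereBundle.image_snd, fun _ _ => rfl,
    hemisphereBundle.homotopyEquiv hφ, fun _ => rfl⟩

/-- for continuous `φ : M → ℝ^{k+1}` and
`B_φ = {(p,x) ∈ S^k × M : ⟨p, φ(x)⟩ > 0}`, the projection `(p,x) ↦ x` maps `B_φ` onto
`M \ φ⁻¹(0)`, its fibers are open hemispheres of `S^k`, and it is a homotopy equivalence
between `B_φ` and `M \ φ⁻¹(0)`. -/
theorem statement10 {k m : ℕ} {M : Type*} [TopologicalSpace M]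
    [ChartedSpace (EuclideanSpace ℝ (Fin m)) M]
    [IsManifold (𝓡 m) (⊤ : ℕ∞) M] [CompactSpace M]
    (φ : M → EuclideanSpace ℝ (Fin (k+1))) (hφ : Continuous φ)
    (B : Set ((𝕊 k) × M))
    (hB : B = {z : (𝕊 k) × M | 0 < ⟪(z.1 : EuclideanSpace ℝ (Fin (k+1))), φ z.2⟫}) :
    (Prod.snd '' B = {x : M | φ x ≠ 0}) ∧
    (∀ x : M, φ x ≠ 0 →
      {p : (𝕊 k) | (p, x) ∈ B}
        = {p : (𝕊 k) | 0 < ⟪(p : EuclideanSpace ℝ (Fin (k+1))), φ x⟫}) ∧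
    (∃ e : ContinuousMap.HomotopyEquiv B {x : M // φ x ≠ 0},
      ∀ z : B, (e.toFun z : M) = (z : (𝕊 k) × M).2) :=
  statement10_general φ hφ B hB
end

section
/- Let a be a nonzero purely imaginary quaternion and p a purely imaginary quaternion. The real quadratic form q_p on ℍ = ℝ⁴ defined by q_p(x) = ⟨p, x̄ a x⟩ has eigenvalues ‖p‖·‖a‖, ‖p‖·‖a‖, −‖p‖·‖a‖, −‖p‖·‖a‖ (counted with multiplicity). -/
/-! In the basis `1, i, j, k` the symmetric bilinear form of `q_p` is `(x, y) ↦ Re(x̄ · a y p̄)`: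
this uses `Re(uv) = Re(vu)` and `ā = -a`, `p̄ = -p`. So `qpMatrix p a` is the matrix of the
linear map `T y = a y p̄`, and `T² y = a² y p̄² = ‖a‖²‖p‖² y`. Every eigenvalue is therefore
`±‖p‖‖a‖`, and since the trace vanishes there are two of each sign. -/

open Quaternion

/-- The eigenvalues of a real symmetric matrix, counted with multiplicity and listed in
decreasing order. -/
noncomputable def sortedEigenvalues {n : ℕ} {A : Matrix (Fin n) (Fin n) ℝ}
    (hA : A.IsHermitian) : Fin n → ℝ :=
  fun i => (hA.eigenvalues ∘ Tuple.sort hA.eigenvalues) i.rev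

/-- The standard real basis `1, i, j, k` of the quaternions, identifying `ℍ = ℝ⁴`. -/
noncomputable def quatBasis : Fin 4 → ℍ[ℝ] :=
  ![1, ⟨0,1,0,0⟩, ⟨0,0,1,0⟩, ⟨0,0,0,1⟩]

/-- The symmetric 4×4 matrix (w.r.t. the basis `1, i, j, k` of `ℍ = ℝ⁴`) of the real quadratic
form `q_p(x) = ⟨p, x̄ a x⟩`, where `⟨u,v⟩ = Re(ū v)`; its entries are the values of the
associated symmetric bilinear form on basis vectors. -/
noncomputable def qpMatrix (p a : ℍ[ℝ]) : Matrix (Fin 4) (Fin 4) ℝ :=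
  fun i j =>
    ((star p * (star (quatBasis i) * a * quatBasis j)).re
      + (star p * (star (quatBasis j) * a * quatBasis i)).re) / 2

namespace Quaternion

lemma re_mul_comm {R : Type*} [CommRing R] (x y : ℍ[R]) : (x * y).re = (y * x).re := by
  simp only [re_mul]
  ring

lemma mulLeftRight_sq {R : Type*} [CommRing R] [LinearOrder R] [IsStrictOrderedRing R]
    {a b : ℍ[R]} (ha : a.re = 0) (hb : b.re = 0) :
    LinearMap.mulLeftRight R (a, b) ^ 2 = (normSq a * normSq b) • 1 := by
  ext x : 1
  have hx : a * (a * x * b) * b = a ^ 2 * x * b ^ 2 := by noncomm_ring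
  rw [sq, Module.End.mul_apply, LinearMap.mulLeftRight_apply, LinearMap.mulLeftRight_apply, hx,
    sq_eq_neg_normSq.2 ha, sq_eq_neg_normSq.2 hb, LinearMap.smul_apply, Module.End.one_apply,
    neg_mul, mul_neg, neg_mul, neg_neg, coe_mul_eq_smul, smul_mul_assoc, mul_coe_eq_smul,
    smul_smul]

noncomputable def basisOneIJK : Module.Basis (Fin 4) ℝ ℍ[ℝ] :=
  (EuclideanSpace.basisFun (Fin 4) ℝ).toBasis.map linearIsometryEquivTuple.symm.toLinearEquiv

lemma coe_basisOneIJK : ⇑basisOneIJK = quatBasis := by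
  ext i : 1
  fin_cases i <;> ext <;> simp [basisOneIJK, quatBasis]

lemma basisOneIJK_repr_apply (z : ℍ[ℝ]) (i : Fin 4) :
    basisOneIJK.repr z i = (star (quatBasis i) * z).re := by
  simp only [basisOneIJK, Module.Basis.map_repr]
  simp only [re_mul, re_star, imI_star, imJ_star, imK_star]
  fin_cases i <;> simp [quatBasis]

variable {a p : ℍ[ℝ]}

lemma re_star_mul_star_mul_mul (ha : a.re = 0) (hp : p.re = 0) (x y : ℍ[ℝ]) :
    (star p * (star y * a * x)).re = (star x * (a * y * star p)).re := by
  rw [← re_star, star_mul, star_mul, star_mul, star_star, star_star, star_eq_neg.mpr ha,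
    star_eq_neg.mpr hp]
  noncomm_ring

lemma qpMatrix_eq_toMatrixAlgEquiv (ha : a.re = 0) (hp : p.re = 0) :
    qpMatrix p a
      = LinearMap.toMatrixAlgEquiv basisOneIJK (LinearMap.mulLeftRight ℝ (a, star p)) := by
  ext i j
  have hcycle : (star p * (star (quatBasis i) * a * quatBasis j)).re
      = (star (quatBasis i) * (a * quatBasis j * star p)).re := by
    rw [re_mul_comm]
    noncomm_ring
  rw [LinearMap.toMatrixAlgEquiv_apply, basisOneIJK_repr_apply, coe_basisOneIJK,
    LinearMap.mulLeftRight_apply, qpMatrix, hcycle, re_star_mul_star_mul_mul ha hp]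
  ring

lemma qpMatrix_sq (ha : a.re = 0) (hp : p.re = 0) :
    qpMatrix p a ^ 2 = (normSq a * normSq p) • 1 := by
  rw [qpMatrix_eq_toMatrixAlgEquiv ha hp, ← map_pow, mulLeftRight_sq ha (by rwa [re_star]),
    normSq_star, map_smul, map_one]

lemma qpMatrix_trace (ha : a.re = 0) (hp : p.re = 0) : (qpMatrix p a).trace = 0 := by
  simp [Matrix.trace, Fin.sum_univ_four, qpMatrix, quatBasis, ha, hp]
  ring

lemma qpMatrix_isHermitian (p a : ℍ[ℝ]) : (qpMatrix p a).IsHermitian := by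
  ext i j
  simp only [qpMatrix, Matrix.conjTranspose_apply, star_trivial]
  ring

end Quaternion

lemma Matrix.IsHermitian.eigenvalues_sq_eq {𝕜 n : Type*} [RCLike 𝕜] [Fintype n] [DecidableEq n]
    {A : Matrix n n 𝕜} (hA : A.IsHermitian) {c : ℝ} (hc : A ^ 2 = c • 1) (i : n) :
    hA.eigenvalues i ^ 2 = c := by
  have : Nonempty n := ⟨i⟩
  have h := spectrum.pow_mem_pow A 2 (hA.eigenvalues_mem_spectrum_real i)
  rwa [hc, ← Algebra.algebraMap_eq_smul_one, spectrum.scalar_eq, Set.mem_singleton_iff] at h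

lemma eq_of_antitone_of_sq_eq_of_sum_eq_zero {c : ℝ} (hc : 0 ≤ c) {f : Fin 4 → ℝ}
    (hf : Antitone f) (hsq : ∀ i, f i ^ 2 = c ^ 2) (hsum : ∑ i, f i = 0) :
    f = ![c, c, -c, -c] := by
  have hpm : ∀ i, f i = c ∨ f i = -c := fun i => sq_eq_sq_iff_eq_or_eq_neg.1 (hsq i)
  have h01 : f 1 ≤ f 0 := hf (by decide)
  have h12 : f 2 ≤ f 1 := hf (by decide)
  have h23 : f 3 ≤ f 2 := hf (by decide)
  rw [Fin.sum_univ_four] at hsum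
  ext i
  rcases hpm 0 with h0 | h0 <;> rcases hpm 1 with h1 | h1 <;> rcases hpm 2 with h2 | h2 <;>
    rcases hpm 3 with h3 | h3 <;> fin_cases i <;> simp <;> linarith

lemma sortedEigenvalues_eq_of_sq_eq_of_trace_eq_zero {A : Matrix (Fin 4) (Fin 4) ℝ}
    (hA : A.IsHermitian) {c : ℝ} (hc : 0 ≤ c) (hsq : A ^ 2 = c ^ 2 • 1) (htr : A.trace = 0) :
    sortedEigenvalues hA = ![c, c, -c, -c] := by
  refine eq_of_antitone_of_sq_eq_of_sum_eq_zero hc ?_ (fun i => hA.eigenvalues_sq_eq hsq _) ?_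
  · exact (Tuple.monotone_sort _).comp_antitone Fin.rev_anti
  · rw [← htr, hA.trace_eq_sum_eigenvalues]
    exact Equiv.sum_comp (Fin.revPerm.trans (Tuple.sort hA.eigenvalues)) _

theorem statement17_general (a p : ℍ[ℝ]) (ha0 : a.re = 0) (hp : p.re = 0) :
    ∃ h : (qpMatrix p a).IsHermitian,
      sortedEigenvalues h
        = ![‖p‖ * ‖a‖, ‖p‖ * ‖a‖, -(‖p‖ * ‖a‖), -(‖p‖ * ‖a‖)] := by
  refine ⟨qpMatrix_isHermitian p a,
    sortedEigenvalues_eq_of_sq_eq_of_trace_eq_zero _ (by positivity) ?_ (qpMatrix_trace ha0 hp)⟩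
  rw [qpMatrix_sq ha0 hp, mul_pow, sq, sq, ← normSq_eq_norm_mul_self, ← normSq_eq_norm_mul_self,
    mul_comm]

/-- for a nonzero purely imaginary quaternion `a` and a purely imaginary
quaternion `p`, the real quadratic form `q_p(x) = ⟨p, x̄ a x⟩` on `ℍ = ℝ⁴` has eigenvalues
`‖p‖‖a‖, ‖p‖‖a‖, −‖p‖‖a‖, −‖p‖‖a‖` (in decreasing order, counted with multiplicity). -/
theorem statement17 (a p : ℍ[ℝ]) (ha0 : a.re = 0) (ha : a ≠ 0) (hp : p.re = 0) :
    ∃ h : (qpMatrix p a).IsHermitian,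
      sortedEigenvalues h
        = ![‖p‖ * ‖a‖, ‖p‖ * ‖a‖, -(‖p‖ * ‖a‖), -(‖p‖ * ‖a‖)] :=
  statement17_general a p ha0 hp
end
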